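/- arXiv:1402.2815 — 2 statements merged into one kernel-verified Lean document; each statement's English description precedes it below -/
import Mathlib

section
/- Let C > 0 and W > 0 be real numbers, and let w_k, w_j be reals with 0 < w_k ≤ C, w_j ≥ 2C, and 8·w_k·w_j < W. Then (w_k·w_j)/W < 1 − (1 − 2·w_k·C/W)^{2·⌊w_j/C⌋}. -/
/-! Put `p = 2 wₖ C / W` and `m = 2⌊w_j / C⌋`. Bernoulli's inequality together with
`(1 - p)(1 + p) ≤ 1` gives `(1 - p)^m ≤ 1 / (1 + m p)`, so the right-hand side is at least
`m p / (1 + m p)`. Since `w_j < (⌊w_j / C⌋ + 1) C ≤ 2 ⌊w_j / C⌋ C`, the quantity `a = wₖ w_j / W`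
satisfies `2a < m p`, and `a < 2a / (1 + 2a)` as soon as `a < 1/2`. -/

theorem one_sub_pow_mul_one_add_mul_le {p : ℝ} (hp0 : 0 ≤ p) (hp1 : p ≤ 1) (m : ℕ) :
    (1 - p) ^ m * (1 + m * p) ≤ 1 :=
  calc (1 - p) ^ m * (1 + m * p) ≤ (1 - p) ^ m * (1 + p) ^ m :=
        mul_le_mul_of_nonneg_left (one_add_mul_le_pow (by linarith) m)
          (pow_nonneg (by linarith) m)
    _ = (1 - p ^ 2) ^ m := by rw [← mul_pow]; ring
    _ ≤ 1 := pow_le_one₀ (by nlinarith) (by nlinarith)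

theorem mul_div_one_add_mul_le_one_sub_pow {p : ℝ} (hp0 : 0 ≤ p) (hp1 : p ≤ 1) (m : ℕ) :
    m * p / (1 + m * p) ≤ 1 - (1 - p) ^ m := by
  rw [div_le_iff₀ (by positivity)]
  linarith [one_sub_pow_mul_one_add_mul_le hp0 hp1 m]

theorem lt_div_one_add_of_two_mul_lt {a b : ℝ} (ha : 0 < a) (ha2 : a ≤ 1 / 2) (hab : 2 * a < b) :
    a < b / (1 + b) := by
  rw [lt_div_iff₀ (by linarith)]
  nlinarith

theorem lt_floor_add_one_mul {x C : ℝ} (hC : 0 < C) : x < (⌊x / C⌋₊ + 1) * C := by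
  rw [← div_lt_iff₀ hC]
  exact Nat.lt_floor_add_one _

theorem copies_domination_general
    (C W wk wj : ℝ) (hC : 0 < C) (hW : 0 < W)
    (hwk : 0 < wk) (hwj : 2 * C ≤ wj) (h8 : 8 * wk * wj < W) :
    wk * wj / W < 1 - (1 - 2 * wk * C / W) ^ (2 * (⌊wj / C⌋).toNat) := by
  rw [Int.floor_toNat]
  set n := ⌊wj / C⌋₊
  have hn : (1 : ℝ) ≤ n := by
    rw [Nat.one_le_cast, Nat.one_le_floor_iff, one_le_div hC]
    linarith
  have hwj_lt : wj < 2 * n * C := by nlinarith [lt_floor_add_one_mul (x := wj) hC]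
  have hp1 : 2 * wk * C / W ≤ 1 := by
    rw [div_le_one hW]
    nlinarith
  calc wk * wj / W < (2 * n : ℕ) * (2 * wk * C / W) / (1 + (2 * n : ℕ) * (2 * wk * C / W)) := by
        refine lt_div_one_add_of_two_mul_lt (div_pos (by nlinarith) hW) ?_ ?_
        · rw [div_le_iff₀ hW]; linarith
        · rw [← sub_pos]
          field_simp
          push_cast
          nlinarith
    _ ≤ 1 - (1 - 2 * wk * C / W) ^ (2 * n) :=
        mul_div_one_add_mul_le_one_sub_pow (by positivity) hp1 _

/-- **Inequality (3.9).** The probability that a vertex of weight `wk` is adjacent to a heavy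
vertex of weight `wj ≥ 2C` in the Chung-Lu graph with total weight `W` is strictly smaller
than the probability that it is adjacent to at least one of `2⌊wj/C⌋` independent copies of
weight `2C` (provided `8 wk wj < W`). -/
theorem copies_domination
    (C W wk wj : ℝ) (hC : 0 < C) (hW : 0 < W)
    (hwk : 0 < wk) (hwkC : wk ≤ C) (hwj : 2 * C ≤ wj) (h8 : 8 * wk * wj < W) :
    wk * wj / W < 1 - (1 - 2 * wk * C / W) ^ (2 * (⌊wj / C⌋).toNat) :=
  copies_domination_general C W wk wj hC hW hwk hwj h8
end

section
/- In the setting of the ODE system of the sequential-exposure process, suppose additionally that ν and μ_U are differentiable functions satisfying ν'(τ) = −1 + G(τ)·Σ_{i=1}^{p_ℓ} (W_i/d)·γ_{i,r−1}(τ) and μ_U'(τ) = −G(τ) + G(τ)·Σ_{i=1}^{p_ℓ} (W_i²/d)·γ_{i,r−1}(τ), with initial conditions ν(0) = p(1−γ) + γ', μ_U(0) = W'_γ + p·Σ_{i=1}^{p_ℓ} W_i γ_i, γ_{i,0}(0) = (1−p)γ_i and γ_{i,j}(0) = 0 for 1 ≤ j ≤ r−1. Then for all τ ≥ 0: ν(τ)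 = p(1−γ) + γ' − τ + (1−p)·Σ_{i=1}^{p_ℓ} γ_i·ψ_r(W_i·I(τ)/d), and μ_U(τ) = W'_γ + p·Σ_{i=1}^{p_ℓ} W_i γ_i − I(τ) + (1−p)·Σ_{i=1}^{p_ℓ} W_i γ_i·ψ_r(W_i·I(τ)/d). -/
/-!
With `u_i(τ) = W_i I(τ) / d`, the equations for `γ_{i,0}, …, γ_{i,r-1}` form the triangular linear
system `g_j' = (g_{j-1} - g_j) u_i'`, whose solution is `γ_{i,j} = (1-p) γ_i e^{-u_i} u_i^j / j!`:
each `γ_{i,j}` is a scaled Poisson probability at mean `u_i`. Since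
`ψ_r'(x) = e^{-x} x^{r-1} / (r-1)!`, the right-hand sides of the equations for `ν` and `μ_U` are
then the derivatives of the claimed closed forms, which agree with `ν` and `μ_U` at `τ = 0`
because `ψ_r(0) = 0`.
-/

open MeasureTheory Filter

noncomputable section

/-- `psi r x` is the probability that a Poisson random variable with mean `x` is at least `r`. -/
def psi (r : ℕ) (x : ℝ) : ℝ :=
  ∑' j : ℕ, if r ≤ j then Real.exp (-x) * x ^ j / (Nat.factorial j : ℝ) else 0

open Finset

def poissonTerm (j : ℕ) (x : ℝ) : ℝ :=
  Real.exp (-x) * x ^ j / (Nat.factorial j : ℝ)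

theorem hasSum_poissonTerm (x : ℝ) : HasSum (poissonTerm · x) 1 := by
  have h := (NormedSpace.expSeries_div_hasSum_exp x).mul_left (Real.exp (-x))
  rw [← Real.exp_eq_exp_ℝ, ← Real.exp_add, neg_add_cancel, Real.exp_zero] at h
  simpa only [poissonTerm, mul_div_assoc] using h

theorem psi_eq_one_sub_sum (r : ℕ) (x : ℝ) :
    psi r x = 1 - ∑ j ∈ range r, poissonTerm j x := by
  have h := (hasSum_poissonTerm x).sub (hasSum_sum_of_ne_finset_zero (s := range r)
    (f := fun j => if j < r then poissonTerm j x else 0) (by simp_all))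
  rw [sum_congr rfl fun j hj => if_pos (mem_range.1 hj)] at h
  refine Eq.trans ?_ h.tsum_eq
  refine tsum_congr fun j => ?_
  by_cases hj : r ≤ j
  · simp [poissonTerm, hj, not_lt.2 hj]
  · simp [poissonTerm, hj, not_le.1 hj]

theorem psi_zero {r : ℕ} (hr : r ≠ 0) : psi r 0 = 0 := by
  rw [psi_eq_one_sub_sum, sum_eq_single_of_mem 0 (mem_range.2 (Nat.pos_of_ne_zero hr))]
  · simp [poissonTerm]
  · intro j _ hj
    simp [poissonTerm, zero_pow hj]

theorem hasDerivAt_poissonTerm_zero (x : ℝ) :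
    HasDerivAt (poissonTerm 0) (-poissonTerm 0 x) x := by
  convert (hasDerivAt_neg x).exp using 1
  · ext y; simp [poissonTerm]
  · simp [poissonTerm]

theorem hasDerivAt_poissonTerm_succ (j : ℕ) (x : ℝ) :
    HasDerivAt (poissonTerm (j + 1)) (poissonTerm j x - poissonTerm (j + 1) x) x := by
  refine ((((hasDerivAt_neg x).exp).fun_mul (hasDerivAt_pow (j + 1) x)).div_const
    ((j + 1).factorial : ℝ)).congr_deriv ?_
  simp only [poissonTerm, Nat.factorial_succ, Nat.cast_mul, Nat.add_sub_cancel]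
  field_simp
  push_cast
  ring

theorem hasDerivAt_sum_range_poissonTerm (n : ℕ) (x : ℝ) :
    HasDerivAt (fun y => ∑ j ∈ range (n + 1), poissonTerm j y) (-poissonTerm n x) x := by
  induction n with
  | zero => simpa using hasDerivAt_poissonTerm_zero x
  | succ n ih =>
    simp_rw [sum_range_succ _ (n + 1)]
    exact (ih.fun_add (hasDerivAt_poissonTerm_succ n x)).congr_deriv (by ring)

theorem hasDerivAt_psi {r : ℕ} (hr : r ≠ 0) (x : ℝ) :
    HasDerivAt (psi r) (poissonTerm (r - 1) x) x := by
  obtain ⟨n, rfl⟩ := Nat.exists_eq_add_one_of_ne_zero hr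
  simp_rw [funext (psi_eq_one_sub_sum (n + 1)), Nat.add_sub_cancel]
  simpa using (hasDerivAt_sum_range_poissonTerm n x).const_sub 1

theorem eq_of_hasDerivAt_eq {E : Type*} [NormedAddCommGroup E] [NormedSpace ℝ E]
    {f g f' : ℝ → E} (hf : ∀ t, HasDerivAt f (f' t) t) (hg : ∀ t, HasDerivAt g (f' t) t)
    (t₀ : ℝ) (h : f t₀ = g t₀) : f = g :=
  eq_of_fderiv_eq (fun t => (hf t).differentiableAt) (fun t => (hg t).differentiableAt)
    (fun t => by rw [(hf t).hasFDerivAt.fderiv, (hg t).hasFDerivAt.fderiv]) t₀ h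

theorem eq_of_hasDerivAt_sub_mul {f g k u u' : ℝ → ℝ} (hu : ∀ t, HasDerivAt u (u' t) t)
    (hf : ∀ t, HasDerivAt f ((k t - f t) * u' t) t)
    (hg : ∀ t, HasDerivAt g ((k t - g t) * u' t) t) (t₀ : ℝ) (h : f t₀ = g t₀) : f = g := by
  -- Integrating factor: `y ↦ y · exp u` sends every solution to an antiderivative of `k u' exp u`.
  have hexp : ∀ y : ℝ → ℝ, (∀ t, HasDerivAt y ((k t - y t) * u' t) t) →
      ∀ t, HasDerivAt (fun s => y s * Real.exp (u s)) (k t * u' t * Real.exp (u t)) t :=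
    fun y hy t => ((hy t).fun_mul (hu t).exp).congr_deriv (by ring)
  have := eq_of_hasDerivAt_eq (hexp f hf) (hexp g hg) t₀ (by simp only [h])
  funext t
  exact mul_right_cancel₀ (Real.exp_ne_zero (u t)) (congrFun this t)

theorem eq_mul_poissonTerm_of_hasDerivAt {m : ℕ} {c : ℝ} {u u' : ℝ → ℝ} {g : ℕ → ℝ → ℝ}
    (hu : ∀ t, HasDerivAt u (u' t) t) (hu0 : u 0 = 0)
    (hg0 : ∀ t, HasDerivAt (g 0) (-g 0 t * u' t) t)
    (hg : ∀ j < m, ∀ t, HasDerivAt (g (j + 1)) ((g j t - g (j + 1) t) * u' t) t)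
    (hg00 : g 0 0 = c) (hgj0 : ∀ j < m, g (j + 1) 0 = 0) :
    ∀ j ≤ m, g j = fun t => c * poissonTerm j (u t) := by
  intro j
  induction j with
  | zero =>
    refine fun _ => eq_of_hasDerivAt_sub_mul (k := 0) hu (fun t => by simpa using hg0 t)
      (fun t => (((hasDerivAt_poissonTerm_zero (u t)).comp t (hu t)).const_mul c).congr_deriv
        (by simp only [Pi.zero_apply]; ring)) 0 ?_
    simp [hg00, hu0, poissonTerm]
  | succ j ih =>
    intro hj
    have hgj := ih (by omega)
    refine eq_of_hasDerivAt_sub_mul hu (hg j hj)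
      (fun t => (((hasDerivAt_poissonTerm_succ j (u t)).comp t (hu t)).const_mul c).congr_deriv
        (by rw [hgj]; ring)) 0 ?_
    simp [hgj0 j hj, hu0, poissonTerm]

theorem eq_sub_add_sum_psi_of_hasDerivAt {ι : Type*} {s : Finset ι} {r : ℕ} (hr : r ≠ 0)
    {a : ι → ℝ} {u u' : ι → ℝ → ℝ} {y A A' : ℝ → ℝ}
    (hu : ∀ i t, HasDerivAt (u i) (u' i t) t) (hu0 : ∀ i, u i 0 = 0)
    (hA : ∀ t, HasDerivAt A (A' t) t) (hA0 : A 0 = 0)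
    (hy : ∀ t, HasDerivAt y (-A' t + ∑ i ∈ s, a i * (poissonTerm (r - 1) (u i t) * u' i t)) t)
    (τ : ℝ) : y τ = y 0 - A τ + ∑ i ∈ s, a i * psi r (u i τ) := by
  have hsol : ∀ t, HasDerivAt (fun t => y 0 - A t + ∑ i ∈ s, a i * psi r (u i t))
      (-A' t + ∑ i ∈ s, a i * (poissonTerm (r - 1) (u i t) * u' i t)) t := fun t =>
    ((hA t).const_sub (y 0)).fun_add <| HasDerivAt.fun_sum fun i _ =>
      ((hasDerivAt_psi hr (u i t)).comp t (hu i t)).const_mul (a i)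
  exact congrFun (eq_of_hasDerivAt_eq hy hsol 0 (by simp [hA0, hu0, psi_zero hr])) τ

theorem nu_muU_solution_general
    (r pℓ : ℕ) (hr : 2 ≤ r)
    (W : Fin pℓ → ℝ) (d : ℝ)
    (γc : Fin pℓ → ℝ)
    (γ γ' W'γ p : ℝ)
    (G : ℝ → ℝ) (hG : Continuous G)
    (γf : Fin pℓ → ℕ → ℝ → ℝ) (ν μU : ℝ → ℝ)
    (hder0 : ∀ i, ∀ τ : ℝ, HasDerivAt (γf i 0) (-(γf i 0 τ) * (W i / d) * G τ) τ)
    (hderj : ∀ i, ∀ j : ℕ, 1 ≤ j → j ≤ r - 1 → ∀ τ : ℝ,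
      HasDerivAt (γf i j) ((γf i (j - 1) τ - γf i j τ) * (W i / d) * G τ) τ)
    (hν' : ∀ τ : ℝ, HasDerivAt ν (-1 + G τ * ∑ i, (W i / d) * γf i (r - 1) τ) τ)
    (hμU' : ∀ τ : ℝ, HasDerivAt μU (-(G τ) + G τ * ∑ i, (W i ^ 2 / d) * γf i (r - 1) τ) τ)
    (hν0 : ν 0 = p * (1 - γ) + γ')
    (hμU0 : μU 0 = W'γ + p * ∑ i, W i * γc i)
    (hγf00 : ∀ i, γf i 0 0 = (1 - p) * γc i)
    (hγfj0 : ∀ i, ∀ j : ℕ, 1 ≤ j → j ≤ r - 1 → γf i j 0 = 0) :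
    ∀ τ : ℝ, 0 ≤ τ →
      ν τ = p * (1 - γ) + γ' - τ
          + (1 - p) * ∑ i, γc i * psi r (W i * (∫ s in (0:ℝ)..τ, G s) / d) ∧
      μU τ = W'γ + p * (∑ i, W i * γc i) - (∫ s in (0:ℝ)..τ, G s)
          + (1 - p) * ∑ i, W i * γc i * psi r (W i * (∫ s in (0:ℝ)..τ, G s) / d) := by
  intro τ _
  have hr0 : r ≠ 0 := by omega
  have hI : ∀ t, HasDerivAt (fun t => ∫ s in (0:ℝ)..t, G s) (G t) t :=
    fun t => (hG.integral_hasStrictDerivAt 0 t).hasDerivAt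
  have hI0 : ∫ s in (0:ℝ)..0, G s = 0 := intervalIntegral.integral_same
  have hu : ∀ i t, HasDerivAt (fun t => W i * (∫ s in (0:ℝ)..t, G s) / d) (W i / d * G t) t :=
    fun i t => (((hI t).const_mul (W i)).div_const d).congr_deriv (by ring)
  have hu0 : ∀ i, W i * (∫ s in (0:ℝ)..0, G s) / d = 0 := fun i => by
    rw [hI0, mul_zero, zero_div]
  have hγ : ∀ i t, γf i (r - 1) t =
      (1 - p) * γc i * poissonTerm (r - 1) (W i * (∫ s in (0:ℝ)..t, G s) / d) := by
    intro i
    refine congrFun (eq_mul_poissonTerm_of_hasDerivAt (hu i) (hu0 i) ?_ ?_ (hγf00 i) ?_ _ le_rfl)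
    · exact fun t => by simpa only [mul_assoc] using hder0 i t
    · exact fun j _ t => by
        simpa only [Nat.add_sub_cancel, mul_assoc] using hderj i (j + 1) (by omega) (by omega) t
    · exact fun j _ => hγfj0 i (j + 1) (by omega) (by omega)
  constructor
  · have hν := eq_sub_add_sum_psi_of_hasDerivAt hr0 (s := Finset.univ)
      (a := fun i => (1 - p) * γc i) hu hu0 hasDerivAt_id rfl (fun t => (hν' t).congr_deriv ?_) τ
    · rw [hν, hν0, mul_sum]
      simp only [id, mul_assoc]
    · simp only [hγ, mul_sum]
      exact congrArg _ (sum_congr rfl fun i _ => by ring)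
  · have hμU := eq_sub_add_sum_psi_of_hasDerivAt hr0 (s := Finset.univ)
      (a := fun i => (1 - p) * (W i * γc i)) hu hu0 hI hI0 (fun t => (hμU' t).congr_deriv ?_) τ
    · rw [hμU, hμU0]
      simp only [mul_sum, mul_assoc]
    · simp only [hγ, mul_sum]
      exact congrArg _ (sum_congr rfl fun i _ => by ring)

/-- **Proposition 4.2.** Explicit solution for `ν` and `μ_U` in the limiting system of
differential equations of the sequential-exposure process:
`ν(τ) = p(1−γ) + γ' − τ + (1−p)·Σ_i γ_i ψ_r(W_i I(τ)/d)` and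
`μ_U(τ) = W'_γ + p Σ_i W_i γ_i − I(τ) + (1−p)·Σ_i W_i γ_i ψ_r(W_i I(τ)/d)`. -/
theorem nu_muU_solution
    (r pℓ : ℕ) (hr : 2 ≤ r) (hpℓ : 1 ≤ pℓ)
    (W : Fin pℓ → ℝ) (hW : ∀ i, 0 < W i) (d : ℝ) (hd : 0 < d)
    (γc : Fin pℓ → ℝ) (hγc : ∀ i, 0 < γc i)
    (γ γ' W'γ p : ℝ) (hγ0 : 0 ≤ γ) (hγ'0 : 0 ≤ γ') (hW'γ : 0 ≤ W'γ)
    (hp0 : 0 ≤ p) (hp1 : p < 1)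
    (G : ℝ → ℝ) (hG : Continuous G)
    (γf : Fin pℓ → ℕ → ℝ → ℝ) (ν μU : ℝ → ℝ)
    (hder0 : ∀ i, ∀ τ : ℝ, HasDerivAt (γf i 0) (-(γf i 0 τ) * (W i / d) * G τ) τ)
    (hderj : ∀ i, ∀ j : ℕ, 1 ≤ j → j ≤ r - 1 → ∀ τ : ℝ,
      HasDerivAt (γf i j) ((γf i (j - 1) τ - γf i j τ) * (W i / d) * G τ) τ)
    (hν' : ∀ τ : ℝ, HasDerivAt ν (-1 + G τ * ∑ i, (W i / d) * γf i (r - 1) τ) τ)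
    (hμU' : ∀ τ : ℝ, HasDerivAt μU (-(G τ) + G τ * ∑ i, (W i ^ 2 / d) * γf i (r - 1) τ) τ)
    (hν0 : ν 0 = p * (1 - γ) + γ')
    (hμU0 : μU 0 = W'γ + p * ∑ i, W i * γc i)
    (hγf00 : ∀ i, γf i 0 0 = (1 - p) * γc i)
    (hγfj0 : ∀ i, ∀ j : ℕ, 1 ≤ j → j ≤ r - 1 → γf i j 0 = 0) :
    ∀ τ : ℝ, 0 ≤ τ →
      ν τ = p * (1 - γ) + γ' - τ
          + (1 - p) * ∑ i, γc i * psi r (W i * (∫ s in (0:ℝ)..τ, G s) / d) ∧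
      μU τ = W'γ + p * (∑ i, W i * γc i) - (∫ s in (0:ℝ)..τ, G s)
          + (1 - p) * ∑ i, W i * γc i * psi r (W i * (∫ s in (0:ℝ)..τ, G s) / d) :=
  nu_muU_solution_general r pℓ hr W d γc γ γ' W'γ p G hG γf ν μU hder0 hderj hν' hμU' hν0 hμU0 hγf00
    hγfj0
end
end
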